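/- arXiv:math/0511354 — 3 statements merged into one kernel-verified Lean document; each statement's English description precedes it below -/
import Mathlib

section
/- Let A be a bounded self-adjoint operator on a complex Hilbert space and y ⟂ ker A. Then for every ε > 0 there exists a₀ > 0 such that for all 0 < a < a₀, ‖(A + iaI)⁻¹ A y − y‖ < ε. -/
/-! Since `A` is self-adjoint, the cross term vanishes in `‖(A + ia) v‖² = ‖A v‖² + a² ‖v‖²`, so
`A + ia` is invertible for `a ≠ 0` and `R_a := (A + ia)⁻¹` satisfies `‖R_a A‖ ≤ 1` (as `R_a` commutes
with `A`). On the range of `A` the convergence is explicit: `R_a A (A x) - A x = -ia R_a (A x)` has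
norm at most `|a| ‖x‖`. As `y ⟂ ker A` and `(ker A)ᗮ` is the closure of the range of `A`, the bound
`‖R_a A - 1‖ ≤ 2`, uniform in `a`, passes the estimate from `A x` close to `y` on to `y`. -/

open Complex

theorem Ring.inverse_add_smul_one_mul_self {𝕜 R : Type*} [CommRing 𝕜] [Ring R] [Algebra 𝕜 R]
    {a : R} {c : 𝕜} (h : IsUnit (a + c • 1)) :
    Ring.inverse (a + c • 1) * a = 1 - c • Ring.inverse (a + c • 1) := by
  calc Ring.inverse (a + c • 1) * a
      = Ring.inverse (a + c • 1) * (a + c • 1) - c • Ring.inverse (a + c • 1) := by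
        rw [mul_add, mul_smul_comm, mul_one, add_sub_cancel_right]
    _ = 1 - c • Ring.inverse (a + c • 1) := by rw [Ring.inverse_mul_cancel _ h]

theorem Commute.ringInverse_right {M₀ : Type*} [MonoidWithZero M₀] {a b : M₀} (h : Commute a b) :
    Commute a (Ring.inverse b) := by
  by_cases hb : IsUnit b
  · obtain ⟨u, rfl⟩ := hb
    rw [Ring.inverse_unit]
    exact h.units_inv_right
  · rw [Ring.inverse_non_unit b hb]
    exact Commute.zero_right a

namespace IsSelfAdjoint

variable {H : Type*} [NormedAddCommGroup H] [InnerProductSpace ℂ H] [CompleteSpace H]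
  {A : H →L[ℂ] H}

theorem norm_add_I_mul_smul_one_apply_sq (hA : IsSelfAdjoint A) (a : ℝ) (v : H) :
    ‖(A + (I * a) • (1 : H →L[ℂ] H)) v‖ ^ 2 = ‖A v‖ ^ 2 + a ^ 2 * ‖v‖ ^ 2 := by
  have him : (inner ℂ (A v) v).im = 0 := hA.isSymmetric.im_inner_apply_self v
  have hcross : RCLike.re (inner ℂ (A v) ((I * a) • v)) = 0 := by simp [him]
  rw [add_apply, smul_apply, one_apply_eq_self, norm_add_sq (𝕜 := ℂ), hcross, norm_smul]
  simp [mul_pow]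

theorem norm_apply_le_norm_add_I_mul_smul_one_apply (hA : IsSelfAdjoint A) (a : ℝ) (v : H) :
    ‖A v‖ ≤ ‖(A + (I * a) • (1 : H →L[ℂ] H)) v‖ := by
  refine (pow_le_pow_iff_left₀ (norm_nonneg _) (norm_nonneg _) two_ne_zero).mp ?_
  rw [hA.norm_add_I_mul_smul_one_apply_sq]
  nlinarith [sq_nonneg a, sq_nonneg ‖v‖]

theorem isUnit_add_I_mul_smul_one (hA : IsSelfAdjoint A) {a : ℝ} (ha : a ≠ 0) :
    IsUnit (A + (I * a) • (1 : H →L[ℂ] H)) := by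
  have hnot : -(I * a) ∉ spectrum ℂ A := fun hmem => by
    simpa [ha] using congrArg Complex.im (hA.mem_spectrum_eq_re hmem)
  rw [spectrum.notMem_iff, Algebra.algebraMap_eq_smul_one, neg_smul, ← neg_add',
    IsUnit.neg_iff, add_comm] at hnot
  exact hnot

theorem norm_inverse_add_I_mul_smul_one_apply_le (hA : IsSelfAdjoint A) {a : ℝ} (ha : a ≠ 0)
    (u : H) : ‖Ring.inverse (A + (I * a) • (1 : H →L[ℂ] H)) (A u)‖ ≤ ‖u‖ := by
  set B := A + (I * a) • (1 : H →L[ℂ] H)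
  have hAB : Commute A B := (Commute.refl A).add_right ((Commute.one_right A).smul_right _)
  have hAR : A (Ring.inverse B u) = Ring.inverse B (A u) :=
    DFunLike.congr_fun hAB.ringInverse_right.eq u
  have hBR : B (Ring.inverse B u) = u :=
    DFunLike.congr_fun (Ring.mul_inverse_cancel B (hA.isUnit_add_I_mul_smul_one ha)) u
  calc ‖Ring.inverse B (A u)‖ = ‖A (Ring.inverse B u)‖ := by rw [hAR]
    _ ≤ ‖B (Ring.inverse B u)‖ := hA.norm_apply_le_norm_add_I_mul_smul_one_apply a _
    _ = ‖u‖ := by rw [hBR]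

theorem norm_inverse_add_I_mul_smul_one_apply_sub_le (hA : IsSelfAdjoint A) {a : ℝ} (ha : a ≠ 0)
    (x y : H) :
    ‖Ring.inverse (A + (I * a) • (1 : H →L[ℂ] H)) (A y) - y‖ ≤ 2 * ‖y - A x‖ + |a| * ‖x‖ := by
  set R := Ring.inverse (A + (I * a) • (1 : H →L[ℂ] H))
  have hRA : ∀ u, R (A u) - u = -((I * a) • R u) := fun u => by
    have : R (A u) = u - (I * a) • R u := DFunLike.congr_fun
      (Ring.inverse_add_smul_one_mul_self (hA.isUnit_add_I_mul_smul_one ha)) u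
    rw [this, sub_sub_cancel_left]
  have hw : ‖R (A (y - A x)) - (y - A x)‖ ≤ 2 * ‖y - A x‖ := by
    have hRAw := hA.norm_inverse_add_I_mul_smul_one_apply_le ha (y - A x)
    linarith [norm_sub_le (R (A (y - A x))) (y - A x)]
  have hAx : ‖R (A (A x)) - A x‖ ≤ |a| * ‖x‖ := by
    rw [hRA, norm_neg, norm_smul]
    simpa using mul_le_mul_of_nonneg_left (hA.norm_inverse_add_I_mul_smul_one_apply_le ha x)
      (abs_nonneg a)
  calc ‖R (A y) - y‖ = ‖(R (A (y - A x)) - (y - A x)) + (R (A (A x)) - A x)‖ := by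
        rw [map_sub, map_sub]; abel_nf
    _ ≤ 2 * ‖y - A x‖ + |a| * ‖x‖ := (norm_add_le _ _).trans (add_le_add hw hAx)

theorem orthogonal_ker (hA : IsSelfAdjoint A) : A.kerᗮ = A.range.topologicalClosure := by
  rw [A.orthogonal_ker, hA.adjoint_eq]

end IsSelfAdjoint

theorem stmt5 {H : Type*} [NormedAddCommGroup H] [InnerProductSpace ℂ H] [CompleteSpace H]
    (A : H →L[ℂ] H) (hA : IsSelfAdjoint A) (y : H)
    (hy : ∀ u : H, A u = 0 → (inner ℂ y u : ℂ) = 0)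
    (ε : ℝ) (hε : 0 < ε) :
    ∃ a₀ > 0, ∀ a : ℝ, 0 < a → a < a₀ →
      ‖Ring.inverse (A + (Complex.I * (a : ℂ)) • (1 : H →L[ℂ] H)) (A y) - y‖ < ε := by
  have hyc : y ∈ closure (A.range : Set H) := by
    rw [← Submodule.topologicalClosure_coe, ← hA.orthogonal_ker]
    exact (Submodule.mem_orthogonal' _ _).mpr hy
  obtain ⟨_, ⟨x, rfl⟩, hx⟩ := Metric.mem_closure_iff.mp hyc (ε / 4) (by positivity)
  refine ⟨ε / (2 * (‖x‖ + 1)), by positivity, fun a ha haa => ?_⟩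
  have hax : |a| * ‖x‖ < ε / 2 := by
    have ha₀ := (lt_div_iff₀ (by positivity)).mp haa
    rw [abs_of_pos ha]
    nlinarith [norm_nonneg x]
  calc _ ≤ 2 * ‖y - A x‖ + |a| * ‖x‖ := hA.norm_inverse_add_I_mul_smul_one_apply_sub_le ha.ne' x y
    _ < ε := by rw [← dist_eq_norm, ← ContinuousLinearMap.coe_coe]; linarith
end

section
/- Let B be a bounded self-adjoint operator on a Hilbert space with 0 ≤ B ≤ I, and let w ∈ H be orthogonal to the subspace {u : B u = 0}. Then lim_{n→∞} ‖(I − B)ⁿ w‖ = 0. -/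
open ContinuousLinearMap Filter Topology
open scoped InnerProductSpace

/-!
Put `T = I - B`, so `0 ≤ T ≤ I`. The powers `T ^ n` decrease in the operator order, so
`a n = re ⟪w, T ^ n w⟫` decreases to a limit `L`. Since `T` is self-adjoint,
`‖T ^ n w - T ^ m w‖² = a (2n) - 2 a (n + m) + a (2m) → L - 2L + L = 0`, so `T ^ n w` converges
to some `v` with `T v = v`, i.e. `B v = 0`. Then `⟪T ^ n w, v⟫ = ⟪w, T ^ n v⟫ = ⟪w, v⟫ = 0`, and in
the limit `‖v‖² = 0`.
-/

namespace ContinuousLinearMap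

variable {H : Type*} [NormedAddCommGroup H] [InnerProductSpace ℂ H] [CompleteSpace H]
  {T : H →L[ℂ] H}

lemma antitone_re_inner_pow_apply (hT₀ : 0 ≤ T) (hT₁ : T ≤ 1) (v : H) :
    Antitone fun n : ℕ => RCLike.re ⟪v, (T ^ n) v⟫_ℂ := by
  intro n m hnm
  have h := ((le_def _ _).mp (CStarAlgebra.pow_antitone hT₀ hT₁ hnm)).re_inner_nonneg_right v
  rwa [sub_apply, inner_sub_right, map_sub, sub_nonneg] at h

lemma re_inner_pow_apply_nonneg (hT₀ : 0 ≤ T) (v : H) (n : ℕ) :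
    0 ≤ RCLike.re ⟪v, (T ^ n) v⟫_ℂ :=
  ((nonneg_iff_isPositive _).mp (CStarAlgebra.pow_nonneg hT₀ n)).re_inner_nonneg_right v

lemma _root_.IsSelfAdjoint.inner_pow_apply_pow_apply (hT : IsSelfAdjoint T) (v : H) (n m : ℕ) :
    ⟪(T ^ n) v, (T ^ m) v⟫_ℂ = ⟪v, (T ^ (n + m)) v⟫_ℂ := by
  rw [pow_add]
  exact (hT.pow n).isSymmetric v _

lemma _root_.IsSelfAdjoint.dist_pow_apply_sq (hT : IsSelfAdjoint T) (v : H) (n m : ℕ) :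
    dist ((T ^ n) v) ((T ^ m) v) ^ 2 = RCLike.re ⟪v, (T ^ (n + n)) v⟫_ℂ
      - 2 * RCLike.re ⟪v, (T ^ (n + m)) v⟫_ℂ + RCLike.re ⟪v, (T ^ (m + m)) v⟫_ℂ := by
  rw [dist_eq_norm, norm_sub_sq (𝕜 := ℂ), ← hT.inner_pow_apply_pow_apply,
    ← hT.inner_pow_apply_pow_apply, ← hT.inner_pow_apply_pow_apply,
    ← inner_self_eq_norm_sq (𝕜 := ℂ), ← inner_self_eq_norm_sq (𝕜 := ℂ)]

lemma cauchySeq_pow_apply (hT₀ : 0 ≤ T) (hT₁ : T ≤ 1) (v : H) :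
    CauchySeq fun n : ℕ => (T ^ n) v := by
  set a : ℕ → ℝ := fun n => RCLike.re ⟪v, (T ^ n) v⟫_ℂ
  obtain ⟨L, ha⟩ : ∃ L, Tendsto a atTop (𝓝 L) :=
    ⟨_, tendsto_atTop_ciInf (antitone_re_inner_pow_apply hT₀ hT₁ v)
      ⟨0, Set.forall_mem_range.mpr (re_inner_pow_apply_nonneg hT₀ v)⟩⟩
  have hfst : Tendsto (Prod.fst : ℕ × ℕ → ℕ) atTop atTop := by
    rw [← prod_atTop_atTop_eq]; exact tendsto_fst
  have hsnd : Tendsto (Prod.snd : ℕ × ℕ → ℕ) atTop atTop := by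
    rw [← prod_atTop_atTop_eq]; exact tendsto_snd
  have hlim : Tendsto (fun p : ℕ × ℕ => a (p.1 + p.1) - 2 * a (p.1 + p.2) + a (p.2 + p.2))
      atTop (𝓝 0) := by
    have := ((ha.comp (hfst.atTop_add_atTop hfst)).sub
      ((ha.comp (hfst.atTop_add_atTop hsnd)).const_mul 2)).add
      (ha.comp (hsnd.atTop_add_atTop hsnd))
    rwa [show L - 2 * L + L = 0 by ring] at this
  rw [cauchySeq_iff_tendsto_dist_atTop_0]
  have hdist (p : ℕ × ℕ) : dist ((T ^ p.1) v) ((T ^ p.2) v)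
      = √(a (p.1 + p.1) - 2 * a (p.1 + p.2) + a (p.2 + p.2)) := by
    rw [← (IsSelfAdjoint.of_nonneg hT₀).dist_pow_apply_sq, Real.sqrt_sq dist_nonneg]
  simpa only [hdist, Real.sqrt_zero, Function.comp_def] using
    (Real.continuous_sqrt.tendsto 0).comp hlim

lemma tendsto_pow_apply_zero_of_orthogonal_fixedPoints (hT₀ : 0 ≤ T) (hT₁ : T ≤ 1) {w : H}
    (hw : ∀ u, T u = u → ⟪w, u⟫_ℂ = 0) : Tendsto (fun n : ℕ => (T ^ n) w) atTop (𝓝 0) := by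
  obtain ⟨v, hv⟩ := cauchySeq_tendsto_of_complete (cauchySeq_pow_apply hT₀ hT₁ w)
  have hTv : T v = v := by
    simp only [FunLike.coe_pow_eq_iterate] at hv
    exact isFixedPt_of_tendsto_iterate hv T.continuous.continuousAt
  have hTnv (n : ℕ) : (T ^ n) v = v := by
    rw [FunLike.coe_pow_eq_iterate]; exact Function.IsFixedPt.iterate hTv n
  have horth (n : ℕ) : ⟪(T ^ n) w, v⟫_ℂ = 0 := by
    calc ⟪(T ^ n) w, v⟫_ℂ = ⟪w, (T ^ n) v⟫_ℂ :=
        ((IsSelfAdjoint.of_nonneg hT₀).pow n).isSymmetric w v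
      _ = 0 := by rw [hTnv, hw v hTv]
  have hvv : ⟪v, v⟫_ℂ = 0 :=
    tendsto_nhds_unique (hv.inner tendsto_const_nhds) (by simp only [horth, tendsto_const_nhds])
  rwa [inner_self_eq_zero.mp hvv] at hv

end ContinuousLinearMap

theorem stmt13 {H : Type*} [NormedAddCommGroup H] [InnerProductSpace ℂ H] [CompleteSpace H]
    (B : H →L[ℂ] H) (hB : B.IsPositive) (hBI : ((1 : H →L[ℂ] H) - B).IsPositive)
    (w : H) (hw : ∀ u : H, B u = 0 → (inner ℂ w u : ℂ) = 0) :
    Tendsto (fun n : ℕ => ‖(((1 : H →L[ℂ] H) - B) ^ n) w‖) atTop (𝓝 0) := by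
  have hT₀ : 0 ≤ 1 - B := (nonneg_iff_isPositive _).mpr hBI
  have hT₁ : 1 - B ≤ 1 := by rwa [ContinuousLinearMap.le_def, sub_sub_cancel]
  have hfix (u : H) (hu : (1 - B) u = u) : ⟪w, u⟫_ℂ = 0 :=
    hw u (by rwa [sub_apply, one_apply_eq_self, sub_eq_self] at hu)
  simpa only [norm_zero] using (tendsto_pow_apply_zero_of_orthogonal_fixedPoints hT₀ hT₁ hfix).norm
end

section
/- Let B be a bounded self-adjoint operator with 0 ≤ B ≤ I on a Hilbert space, B y = g, and for each δ > 0 let g_δ with ‖g_δ − g‖ ≤ δ be given. Choose v_0 with v_0 − y ⟂ {u : Bu = 0}, and let v_{n+1} = (I − B) v_n + g_δ. If n(δ) → ∞ and δ·n(δ) → 0 as δ → 0⁺, then ‖v_{n(δ)} − y‖ → 0. -/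
open ContinuousLinearMap Filter Topology

set_option maxHeartbeats 1000000 in
theorem stmt14 {H : Type*} [NormedAddCommGroup H] [InnerProductSpace ℂ H] [CompleteSpace H]
    (B : H →L[ℂ] H) (hB : B.IsPositive) (hBI : ((1 : H →L[ℂ] H) - B).IsPositive)
    (y g : H) (hy : B y = g)
    (gδ : ℝ → H) (hgδ : ∀ δ : ℝ, 0 < δ → ‖gδ δ - g‖ ≤ δ)
    (v0 : H) (hv0 : ∀ u : H, B u = 0 → (inner ℂ (v0 - y) u : ℂ) = 0)
    (v : ℝ → ℕ → H) (hvz : ∀ δ : ℝ, v δ 0 = v0)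
    (hv : ∀ δ : ℝ, ∀ k : ℕ, v δ (k + 1) = ((1 : H →L[ℂ] H) - B) (v δ k) + gδ δ)
    (n : ℝ → ℕ) (hn : Tendsto n (𝓝[>] (0 : ℝ)) atTop)
    (hdn : Tendsto (fun δ : ℝ => δ * (n δ : ℝ)) (𝓝[>] (0 : ℝ)) (𝓝 0)) :
    Tendsto (fun δ : ℝ => ‖v δ (n δ) - y‖) (𝓝[>] (0 : ℝ)) (𝓝 0) := by
  set A : H →L[ℂ] H := (1 : H →L[ℂ] H) - B with hAdef
  have hA_apply : ∀ u : H, A u = u - B u := by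
    intro u
    rw [hAdef, ContinuousLinearMap.sub_apply, ContinuousLinearMap.one_apply]
  have hApos : (0 : H →L[ℂ] H) ≤ A := (ContinuousLinearMap.nonneg_iff_isPositive _).mpr hBI
  set s : H →L[ℂ] H := CFC.sqrt A with hsdef
  have hs2 : s * s = A := CFC.sqrt_mul_sqrt_self A hApos
  have hssa : IsSelfAdjoint s := IsSelfAdjoint.of_nonneg (CFC.sqrt_nonneg A)
  have hsym : ∀ u w : H, (inner ℂ (s u) w : ℂ) = inner ℂ u (s w) :=
    ContinuousLinearMap.isSelfAdjoint_iff_isSymmetric.mp hssa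
  have hsA : ∀ u : H, A u = s (s u) := fun u => by
    conv_lhs => rw [← hs2]
    rfl
  -- the square root is a contraction
  have hsle : ∀ u : H, ‖s u‖ ≤ ‖u‖ := by
    intro u
    have h1 : RCLike.re (inner ℂ (s u) (s u) : ℂ) = ‖s u‖ ^ 2 := inner_self_eq_norm_sq _
    have h2 : (inner ℂ (s u) (s u) : ℂ) = inner ℂ u (A u) := by
      rw [hsym u (s u), hsA]
    have h3 : RCLike.re (inner ℂ u (A u) : ℂ) ≤ ‖u‖ ^ 2 := by
      have hb : 0 ≤ RCLike.re (inner ℂ (B u) u : ℂ) := hB.re_inner_nonneg_left u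
      have hAu : (inner ℂ (A u) u : ℂ) = inner ℂ u u - inner ℂ (B u) u := by
        simp [hAdef, inner_sub_left]
      have : RCLike.re (inner ℂ u (A u) : ℂ) = RCLike.re (inner ℂ (A u) u : ℂ) :=
        inner_re_symm _ _
      rw [this, hAu, map_sub]
      have := inner_self_eq_norm_sq (𝕜 := ℂ) u
      linarith
    have h4 : ‖s u‖ ^ 2 ≤ ‖u‖ ^ 2 := by rw [← h1, h2]; exact h3
    exact le_of_pow_le_pow_left₀ two_ne_zero (norm_nonneg u) h4
  have hAle : ∀ u : H, ‖A u‖ ≤ ‖u‖ := fun u => by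
    rw [hsA]; exact (hsle _).trans (hsle u)
  set x : H := v0 - y with hxdef
  -- powers of s pair up under the inner ℂ product
  have hinner : ∀ i j : ℕ, (inner ℂ ((s ^ i) x) ((s ^ j) x) : ℂ) = inner ℂ ((s ^ (i + j)) x) x := by
    intro i j
    induction j generalizing i with
    | zero => simp
    | succ j ih =>
      have hl : (s ^ (j + 1)) x = s ((s ^ j) x) := by
        rw [pow_succ']; rfl
      have hr : (s ^ (i + 1)) x = s ((s ^ i) x) := by
        rw [pow_succ']; rfl
      rw [hl, ← hsym, ← hr, ih (i + 1)]
      ring_nf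
  have hApow : ∀ k : ℕ, (A ^ k) = s ^ (2 * k) := by
    intro k
    rw [← hs2, two_mul, pow_add, ← (Commute.refl s).mul_pow]
  -- the sequence b k = ‖(s ^ k) x‖ is antitone
  set b : ℕ → ℝ := fun k => ‖(s ^ k) x‖ with hbdef
  have hbnn : ∀ k, 0 ≤ b k := fun k => norm_nonneg _
  have hbanti : Antitone b := by
    apply antitone_nat_of_succ_le
    intro k
    have : (s ^ (k + 1)) x = s ((s ^ k) x) := by rw [pow_succ']; rfl
    rw [hbdef]
    simp only []
    rw [this]
    exact hsle _
  -- b converges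
  have hbbdd : BddBelow (Set.range b) := ⟨0, by rintro r ⟨k, rfl⟩; exact hbnn k⟩
  set c : ℝ := ⨅ k, b k with hcdef
  have hbc : Tendsto b atTop (𝓝 c) := tendsto_atTop_ciInf hbanti hbbdd
  have hbc2 : Tendsto (fun k => b k ^ 2) atTop (𝓝 (c ^ 2)) := hbc.pow 2
  -- re-inner ℂ of even powers in terms of b
  have hre : ∀ p q : ℕ, RCLike.re (inner ℂ ((s ^ (2 * p)) x) ((s ^ (2 * q)) x) : ℂ) = b (p + q) ^ 2 := by
    intro p q
    rw [hinner]
    have h1 : 2 * p + 2 * q = (p + q) + (p + q) := by ring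
    rw [h1, ← hinner (p + q) (p + q)]
    exact inner_self_eq_norm_sq _
  -- the sequence (A ^ k) x is Cauchy
  have hcauchy : CauchySeq (fun k : ℕ => (A ^ k) x) := by
    rw [Metric.cauchySeq_iff]
    intro ε hε
    have hε2 : 0 < ε ^ 2 / 4 := by positivity
    obtain ⟨N, hN⟩ := (Metric.tendsto_atTop.mp hbc2) (ε ^ 2 / 4) hε2
    refine ⟨N, fun p hp q hq => ?_⟩
    have key : ‖(A ^ p) x - (A ^ q) x‖ ^ 2 = b (2 * p) ^ 2 - 2 * b (p + q) ^ 2 + b (2 * q) ^ 2 := by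
      rw [norm_sub_sq (𝕜 := ℂ) ((A ^ p) x) ((A ^ q) x)]
      rw [hApow p, hApow q, hre p q]
    have h2p := hN (2 * p) (le_trans hp (by omega))
    have h2q := hN (2 * q) (le_trans hq (by omega))
    have hpq := hN (p + q) (le_trans hp (by omega))
    rw [Real.dist_eq] at h2p h2q hpq
    have habs2p := abs_lt.mp h2p
    have habs2q := abs_lt.mp h2q
    have habspq := abs_lt.mp hpq
    have hlt : ‖(A ^ p) x - (A ^ q) x‖ ^ 2 < ε ^ 2 := by
      rw [key]; linarith [habs2p.1, habs2p.2, habs2q.1, habs2q.2, habspq.1, habspq.2]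
    rw [dist_eq_norm]
    exact lt_of_pow_lt_pow_left₀ 2 hε.le hlt
  -- the limit exists and is zero
  obtain ⟨z, hz⟩ := cauchySeq_tendsto_of_complete hcauchy
  have hAz : A z = z := by
    have h1 : Tendsto (fun k : ℕ => A ((A ^ k) x)) atTop (𝓝 (A z)) :=
      (A.continuous.tendsto z).comp hz
    have h2 : Tendsto (fun k : ℕ => A ((A ^ k) x)) atTop (𝓝 z) := by
      have : (fun k : ℕ => A ((A ^ k) x)) = fun k : ℕ => (A ^ (k + 1)) x := by
        funext k
        rw [pow_succ']; rfl
      rw [this]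
      exact hz.comp (tendsto_add_atTop_nat 1)
    exact tendsto_nhds_unique h1 h2
  have hBz : B z = 0 := by
    have h : z - B z = z := by
      conv_rhs => rw [← hAz]
      rw [hA_apply]
    exact sub_eq_self.mp h
  have hxz : (inner ℂ x z : ℂ) = 0 := hv0 z hBz
  have hAkz : ∀ k : ℕ, (inner ℂ ((A ^ k) x) z : ℂ) = 0 := by
    intro k
    have hAsym : ∀ u w : H, (inner ℂ (A u) w : ℂ) = inner ℂ u (A w) :=
      ContinuousLinearMap.isSelfAdjoint_iff_isSymmetric.mp hBI.isSelfAdjoint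
    induction k with
    | zero => simpa using hxz
    | succ k ih =>
      have : (A ^ (k + 1)) x = A ((A ^ k) x) := by rw [pow_succ']; rfl
      rw [this, hAsym, hAz, ih]
  have hz0 : z = 0 := by
    have h1 : Tendsto (fun k : ℕ => (inner ℂ ((A ^ k) x) z : ℂ)) atTop (𝓝 (inner ℂ z z)) :=
      hz.inner tendsto_const_nhds
    have h2 : Tendsto (fun k : ℕ => (inner ℂ ((A ^ k) x) z : ℂ)) atTop (𝓝 0) := by
      simp only [hAkz]
      exact tendsto_const_nhds
    have : (inner ℂ z z : ℂ) = 0 := tendsto_nhds_unique h1 h2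
    exact inner_self_eq_zero.mp this
  have key : Tendsto (fun k : ℕ => ‖(A ^ k) x‖) atTop (𝓝 0) := by
    rw [hz0] at hz
    simpa using hz.norm
  -- error estimate
  have hest : ∀ δ : ℝ, 0 < δ → ∀ k : ℕ, ‖v δ k - y - (A ^ k) x‖ ≤ k * δ := by
    intro δ hδ k
    induction k with
    | zero => simp [hvz, hxdef]
    | succ k ih =>
      have hAy : A y = y - g := by rw [hA_apply, hy]
      have hrw : v δ (k + 1) - y - (A ^ (k + 1)) x
          = A (v δ k - y - (A ^ k) x) + (gδ δ - g) := by
        rw [hv δ k]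
        have hp : (A ^ (k + 1)) x = A ((A ^ k) x) := by rw [pow_succ']; rfl
        rw [hp]
        simp only [map_sub]
        rw [hAy]
        abel
      rw [hrw]
      calc ‖A (v δ k - y - (A ^ k) x) + (gδ δ - g)‖
          ≤ ‖A (v δ k - y - (A ^ k) x)‖ + ‖gδ δ - g‖ := norm_add_le _ _
        _ ≤ ‖v δ k - y - (A ^ k) x‖ + δ := add_le_add (hAle _) (hgδ δ hδ)
        _ ≤ k * δ + δ := add_le_add_left ih δ
        _ = (k + 1 : ℕ) * δ := by push_cast; ring
  -- final squeeze
  have hbound : ∀ᶠ δ : ℝ in 𝓝[>] (0 : ℝ),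
      ‖v δ (n δ) - y‖ ≤ ‖(A ^ (n δ)) x‖ + δ * (n δ : ℝ) := by
    filter_upwards [self_mem_nhdsWithin] with δ (hδ : 0 < δ)
    calc ‖v δ (n δ) - y‖ = ‖(v δ (n δ) - y - (A ^ (n δ)) x) + (A ^ (n δ)) x‖ := by
          congr 1; abel
      _ ≤ ‖v δ (n δ) - y - (A ^ (n δ)) x‖ + ‖(A ^ (n δ)) x‖ := norm_add_le _ _
      _ ≤ (n δ : ℝ) * δ + ‖(A ^ (n δ)) x‖ := add_le_add_left (hest δ hδ (n δ)) _
      _ = ‖(A ^ (n δ)) x‖ + δ * (n δ : ℝ) := by ring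
  have hg0 : Tendsto (fun δ : ℝ => ‖(A ^ (n δ)) x‖ + δ * (n δ : ℝ)) (𝓝[>] (0 : ℝ)) (𝓝 0) := by
    have h1 : Tendsto (fun δ : ℝ => ‖(A ^ (n δ)) x‖) (𝓝[>] (0 : ℝ)) (𝓝 0) := key.comp hn
    simpa using h1.add hdn
  exact squeeze_zero' (Eventually.of_forall fun δ => norm_nonneg _) hbound hg0
end
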